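/- If φ is the characteristic function of a Borel probability measure on ℝ^d, then I⁺(φ,φ) is also the characteristic function of a Borel probability measure on ℝ^d. -/

import Mathlib

/-!
Realise `I⁺(φ, φ)` as the characteristic function of the law of the post-collision velocity
`v' = (v + w)/2 + |v - w|/2 · n`, where `(v, w) ∼ μ ⊗ μ` and, given `(v, w)`, the direction
`n ∈ S^{d-1}` has density `g(û · n)` with `û` the unit vector along `v - w`; this law is a
probability measure because of the normalisation of `g`. For `k ≠ 0`,
`k · v' = k · (v + w)/2 + |v - w| |k|/2 · (k̂ · n)`. The reflection of `ℝ^d` exchanging `û` and `k̂`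
preserves the surface measure, so `û · n` and `k̂ · n` may be swapped inside the sphere integral,
which turns the phase into `k · (v + w)/2 + |k|/2 · (v - w) · n = k₊ · v + k₋ · w`. Fubini then
factorises the `(v, w)`-integral into `φ(k₊) φ(k₋)`.
-/

open MeasureTheory
open scoped Classical Matrix
noncomputable section

/-- ℝ^d with the Euclidean structure. -/
abbrev Rd (d : ℕ) := EuclideanSpace ℝ (Fin d)

/-- The unit sphere S^{d-1} in ℝ^d. -/
abbrev Sd (d : ℕ) := Metric.sphere (0 : Rd d) 1

/-- The surface measure on the unit sphere. -/
noncomputable def sphMeasure (d : ℕ) : Measure (Sd d) :=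
  (volume : Measure (Rd d)).toSphere

/-- k₊ = (k + |k| n)/2. -/
noncomputable def kplus {d : ℕ} (k : Rd d) (n : Sd d) : Rd d :=
  (2⁻¹ : ℝ) • (k + ‖k‖ • (n : Rd d))

/-- k₋ = (k − |k| n)/2. -/
noncomputable def kminus {d : ℕ} (k : Rd d) (n : Sd d) : Rd d :=
  (2⁻¹ : ℝ) • (k - ‖k‖ • (n : Rd d))

/-- k̂·n for k ≠ 0. -/
noncomputable def khatDot {d : ℕ} (k : Rd d) (n : Sd d) : ℝ :=
  inner ℝ (‖k‖⁻¹ • k) (n : Rd d)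

/-- The gain operator I⁺(φ,ψ). -/
noncomputable def Iplus {d : ℕ} (g : ℝ → ℝ) (φ ψ : Rd d → ℂ) (k : Rd d) : ℂ :=
  if k = 0 then φ 0 * ψ 0
  else ∫ n, (g (khatDot k n) : ℂ) * φ (kplus k n) * ψ (kminus k n) ∂(sphMeasure d)

/-- Γ[φ] = I⁺(φ,φ). -/
noncomputable def Gam {d : ℕ} (g : ℝ → ℝ) (φ : Rd d → ℂ) : Rd d → ℂ :=
  Iplus g φ φ

/-- The linearized operator L, complex-valued version. -/
noncomputable def LopC {d : ℕ} (g : ℝ → ℝ) (ψ : Rd d → ℂ) (k : Rd d) : ℂ :=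
  if k = 0 then 2 * ψ 0
  else ∫ n, (g (khatDot k n) : ℂ) * (ψ (kplus k n) + ψ (kminus k n)) ∂(sphMeasure d)

/-- The linearized operator L, real-valued version. -/
noncomputable def LopR {d : ℕ} (g : ℝ → ℝ) (ψ : Rd d → ℝ) (k : Rd d) : ℝ :=
  if k = 0 then 2 * ψ 0
  else ∫ n, g (khatDot k n) * (ψ (kplus k n) + ψ (kminus k n)) ∂(sphMeasure d)

/-- The Fourier transform (characteristic function) of a measure. -/
noncomputable def charFunRd {d : ℕ} (μ : Measure (Rd d)) (k : Rd d) : ℂ :=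
  ∫ v, Complex.exp (-(Complex.I * ((inner ℝ k v : ℝ) : ℂ))) ∂μ

/-- φ is the characteristic function of a Borel probability measure on ℝ^d. -/
def IsCharFun {d : ℕ} (φ : Rd d → ℂ) : Prop :=
  ∃ μ : Measure (Rd d), IsProbabilityMeasure μ ∧ φ = charFunRd μ

/-- A matrix acting on ℝ^d as a continuous linear map. -/
noncomputable def matCLM {d : ℕ} (A : Matrix (Fin d) (Fin d) ℝ) : Rd d →L[ℝ] Rd d :=
  LinearMap.toContinuousLinearMap (Matrix.toEuclideanLin A)

/-- The operator norm ‖A‖ = sup_{|k|=1} |Ak|. -/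
noncomputable def opN {d : ℕ} (A : Matrix (Fin d) (Fin d) ℝ) : ℝ := ‖matCLM A‖

/-- e^{tA} k, matrix exponential applied to a vector. -/
noncomputable def expA {d : ℕ} (A : Matrix (Fin d) (Fin d) ℝ) (t : ℝ) (k : Rd d) : Rd d :=
  matCLM (NormedSpace.exp (t • A)) k

/-- A mild solution of the Fourier-transformed equation ∂ₜφ + φ + (Ak)·∂ₖφ = Γ[φ]. -/
def IsMildSolution {d : ℕ} (g : ℝ → ℝ) (A : Matrix (Fin d) (Fin d) ℝ)
    (φ₀ : Rd d → ℂ) (φ : ℝ → Rd d → ℂ) : Prop :=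
  (∀ t, 0 ≤ t → IsCharFun (φ t)) ∧
  (∀ t, 0 ≤ t → ∀ ε > (0:ℝ), ∃ δ > (0:ℝ), ∀ s, 0 ≤ s → |s - t| < δ →
      ∀ k, ‖φ s k - φ t k‖ ≤ ε) ∧
  (∀ t, 0 ≤ t → ∀ k, φ t k =
      (Real.exp (-t) : ℂ) * φ₀ (expA A (-t) k)
        + ∫ τ in (0:ℝ)..t, (Real.exp (-(t - τ)) : ℂ) * Gam g (φ τ) (expA A (-(t - τ)) k))


open scoped RealInnerProductSpace

open Metric
open scoped Pointwise

section SphereSymmetry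

variable {E : Type*} [NormedAddCommGroup E] [NormedSpace ℝ E]

def LinearIsometryEquiv.sphereHomeomorph (R : E ≃ₗᵢ[ℝ] E) :
    sphere (0 : E) 1 ≃ₜ sphere (0 : E) 1 :=
  R.toHomeomorph.subtype fun x => by simp

@[simp]
lemma LinearIsometryEquiv.coe_sphereHomeomorph_apply (R : E ≃ₗᵢ[ℝ] E) (n : sphere (0 : E) 1) :
    (R.sphereHomeomorph n : E) = R n :=
  rfl

variable [MeasurableSpace E] [BorelSpace E]

theorem MeasureTheory.MeasurePreserving.toSphere {μ : Measure E} {R : E ≃ₗᵢ[ℝ] E}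
    (hR : MeasurePreserving R μ μ) :
    MeasurePreserving R.sphereHomeomorph μ.toSphere μ.toSphere := by
  have hmeas := R.sphereHomeomorph.continuous.measurable
  refine ⟨hmeas, Measure.ext fun s hs => ?_⟩
  have hcone : Set.Ioo (0 : ℝ) 1 • ((↑) '' (R.sphereHomeomorph ⁻¹' s) : Set E)
      = R ⁻¹' (Set.Ioo (0 : ℝ) 1 • ((↑) '' s)) := by
    ext x
    simp only [Set.mem_smul, Set.mem_image, Set.mem_preimage]
    constructor
    · rintro ⟨r, hr, _, ⟨n, hn, rfl⟩, rfl⟩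
      exact ⟨r, hr, _, ⟨_, hn, rfl⟩, by simp⟩
    · rintro ⟨r, hr, _, ⟨m, hm, rfl⟩, hx⟩
      have hRm : R.sphereHomeomorph (R.symm.sphereHomeomorph m) = m := Subtype.ext (by simp)
      refine ⟨r, hr, _, ⟨R.symm.sphereHomeomorph m, by rwa [hRm], rfl⟩, ?_⟩
      rw [R.symm.coe_sphereHomeomorph_apply, ← map_smul, hx, R.symm_apply_apply]
  rw [Measure.map_apply hmeas hs, Measure.toSphere_apply' _ (hmeas hs),
    Measure.toSphere_apply' _ hs, hcone,
    hR.measure_preimage_emb R.toHomeomorph.measurableEmbedding]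

end SphereSymmetry

theorem integral_toSphere_inner_swap {E G : Type*} [NormedAddCommGroup E] [InnerProductSpace ℝ E]
    [FiniteDimensional ℝ E] [MeasurableSpace E] [BorelSpace E] [NormedAddCommGroup G]
    [NormedSpace ℝ G] {a b : E} (hab : ‖a‖ = ‖b‖) (F : ℝ → ℝ → G) :
    ∫ n, F ⟪a, n⟫ ⟪b, n⟫ ∂(volume : Measure E).toSphere
      = ∫ n, F ⟪b, n⟫ ⟪a, n⟫ ∂(volume : Measure E).toSphere := by
  set R := Submodule.reflection (ℝ ∙ (a - b))ᗮ
  have hRa : R a = b := Submodule.reflection_sub hab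
  have hRb : R b = a := by rw [← hRa, Submodule.reflection_reflection]
  rw [← (R.measurePreserving.toSphere).integral_comp
    R.sphereHomeomorph.measurableEmbedding]
  congr! 3 with n
  · rw [R.coe_sphereHomeomorph_apply, ← hRb, R.inner_map_map]
  · rw [R.coe_sphereHomeomorph_apply, ← hRa, R.inner_map_map]

section Collision

variable {E : Type*} [NormedAddCommGroup E] [InnerProductSpace ℝ E]

/-- `e` is only used when `v = w`, where `postCollision v w n` does not depend on `n`. -/
def relVelDir (e v w : E) : E :=
  if v = w then e else ‖v - w‖⁻¹ • (v - w)

lemma norm_relVelDir {e : E} (he : ‖e‖ = 1) (v w : E) : ‖relVelDir e v w‖ = 1 := by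
  unfold relVelDir
  split_ifs with h
  · exact he
  · rw [norm_smul, norm_inv, norm_norm, inv_mul_cancel₀ (norm_ne_zero_iff.mpr (sub_ne_zero.mpr h))]

lemma norm_sub_smul_relVelDir (e v w : E) : ‖v - w‖ • relVelDir e v w = v - w := by
  unfold relVelDir
  split_ifs with h
  · simp [h]
  · rw [smul_smul, mul_inv_cancel₀ (norm_ne_zero_iff.mpr (sub_ne_zero.mpr h)), one_smul]

def postCollision (v w : E) (n : sphere (0 : E) 1) : E :=
  (2⁻¹ : ℝ) • (v + w) + (2⁻¹ * ‖v - w‖) • (n : E)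

lemma inner_postCollision (k v w : E) (n : sphere (0 : E) 1) :
    ⟪k, postCollision v w n⟫ = 2⁻¹ * ⟪k, v + w⟫ + 2⁻¹ * ‖v - w‖ * ⟪k, n⟫ := by
  rw [postCollision, inner_add_right, real_inner_smul_right, real_inner_smul_right]

variable [MeasurableSpace E] [BorelSpace E] [SecondCountableTopology E]

@[fun_prop]
lemma measurable_relVelDir (e : E) : Measurable fun p : E × E => relVelDir e p.1 p.2 := by
  unfold relVelDir
  refine Measurable.ite (measurableSet_eq_fun measurable_fst measurable_snd) measurable_const ?_
  fun_prop

@[fun_prop]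
lemma measurable_postCollision :
    Measurable fun p : (E × E) × sphere (0 : E) 1 => postCollision p.1.1 p.1.2 p.2 := by
  unfold postCollision
  fun_prop

end Collision

def expNegI (x : ℝ) : ℂ := Complex.exp (-(Complex.I * x))

@[fun_prop]
lemma measurable_expNegI : Measurable expNegI := by unfold expNegI; fun_prop

lemma norm_expNegI (x : ℝ) : ‖expNegI x‖ = 1 := by
  simp [expNegI, Complex.norm_exp]

lemma expNegI_add (x y : ℝ) : expNegI (x + y) = expNegI x * expNegI y := by
  simp only [expNegI, Complex.ofReal_add, mul_add, neg_add, Complex.exp_add]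

section GainMeasure

variable {d : ℕ}

instance : IsFiniteMeasure (sphMeasure d) := by
  unfold sphMeasure
  infer_instance

lemma integrable_kernel_smul_expNegI {α : Type*} [MeasurableSpace α] {ν : Measure α}
    [IsFiniteMeasure ν] {g : ℝ → ℝ} (hg_meas : Measurable g) (hg_nonneg : ∀ x, 0 ≤ g x)
    (hg_norm : ∀ ω : Rd d, ‖ω‖ = 1 → ∫ n, g ⟪ω, (n : Rd d)⟫ ∂(sphMeasure d) = 1)
    {u : α → Rd d} (hu_meas : Measurable u) (hu : ∀ x, ‖u x‖ = 1)
    {ψ : α × Sd d → ℝ} (hψ : Measurable ψ) :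
    Integrable (fun p => g ⟪u p.1, p.2⟫ • expNegI (ψ p)) (ν.prod (sphMeasure d)) := by
  have h_norm (x : α) (n : Sd d) : ‖g ⟪u x, n⟫ • expNegI (ψ (x, n))‖ = g ⟪u x, n⟫ := by
    rw [norm_smul, norm_expNegI, mul_one, Real.norm_of_nonneg (hg_nonneg _)]
  have h_meas : Measurable fun p : α × Sd d => g ⟪u p.1, p.2⟫ • expNegI (ψ p) := by fun_prop
  refine (integrable_prod_iff h_meas.aestronglyMeasurable).2 ⟨.of_forall fun x => ?_, ?_⟩
  · exact (Integrable.of_integral_ne_zero (by simp [hg_norm _ (hu x)])).mono'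
      (h_meas.comp measurable_prodMk_left).aestronglyMeasurable
      (.of_forall fun n => (h_norm x n).le)
  · simp_rw [h_norm, hg_norm _ (hu _)]
    exact integrable_const 1

def gainMeasure (g : ℝ → ℝ) (e : Rd d) (μ : Measure (Rd d)) : Measure (Rd d) :=
  (((μ.prod μ).prod (sphMeasure d)).withDensity fun p =>
    ENNReal.ofReal (g ⟪relVelDir e p.1.1 p.1.2, p.2⟫)).map
      fun p => postCollision p.1.1 p.1.2 p.2

lemma isProbabilityMeasure_gainMeasure {g : ℝ → ℝ} (hg_meas : Measurable g)
    (hg_nonneg : ∀ x, 0 ≤ g x)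
    (hg_norm : ∀ ω : Rd d, ‖ω‖ = 1 → ∫ n, g ⟪ω, (n : Rd d)⟫ ∂(sphMeasure d) = 1)
    {e : Rd d} (he : ‖e‖ = 1) (μ : Measure (Rd d)) [IsProbabilityMeasure μ] :
    IsProbabilityMeasure (gainMeasure g e μ) := by
  constructor
  rw [gainMeasure, Measure.map_apply (by fun_prop) .univ, Set.preimage_univ,
    withDensity_apply _ .univ, Measure.restrict_univ, lintegral_prod _ (by fun_prop)]
  have h_sphere (vw : Rd d × Rd d) :
      ∫⁻ n, ENNReal.ofReal (g ⟪relVelDir e vw.1 vw.2, n⟫) ∂(sphMeasure d) = 1 := by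
    have h_one := hg_norm _ (norm_relVelDir he vw.1 vw.2)
    rw [← ofReal_integral_eq_lintegral_ofReal (.of_integral_ne_zero (by simp [h_one]))
      (.of_forall fun _ => hg_nonneg _), h_one, ENNReal.ofReal_one]
  simp [h_sphere]

lemma integral_gainMeasure {G : Type*} [NormedAddCommGroup G] [NormedSpace ℝ G] {g : ℝ → ℝ}
    (hg_meas : Measurable g) (hg_nonneg : ∀ x, 0 ≤ g x) (e : Rd d) (μ : Measure (Rd d))
    {f : Rd d → G} (hf : AEStronglyMeasurable f (gainMeasure g e μ)) :
    ∫ x, f x ∂(gainMeasure g e μ) = ∫ p, g ⟪relVelDir e p.1.1 p.1.2, p.2⟫ •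
      f (postCollision p.1.1 p.1.2 p.2) ∂((μ.prod μ).prod (sphMeasure d)) := by
  rw [gainMeasure, integral_map measurable_postCollision.aemeasurable hf,
    integral_withDensity_eq_integral_toReal_smul (by fun_prop)
      (.of_forall fun _ => ENNReal.ofReal_lt_top)]
  simp_rw [ENNReal.toReal_ofReal (hg_nonneg _)]

lemma inner_kplus_add_inner_kminus (k v w : Rd d) (n : Sd d) :
    ⟪kplus k n, v⟫ + ⟪kminus k n, w⟫ = 2⁻¹ * ⟪k, v + w⟫ + 2⁻¹ * ‖k‖ * ⟪v - w, n⟫ := by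
  simp only [kplus, kminus, real_inner_smul_left, inner_add_left, inner_sub_left,
    inner_add_right, inner_sub_right, real_inner_comm (n : Rd d)]
  ring

lemma integral_sphere_postCollision {g : ℝ → ℝ} {e : Rd d} (he : ‖e‖ = 1) {k : Rd d}
    (hk : k ≠ 0) (v w : Rd d) :
    ∫ n, g ⟪relVelDir e v w, n⟫ • expNegI ⟪k, postCollision v w n⟫ ∂(sphMeasure d)
      = ∫ n, g (khatDot k n) • expNegI (⟪kplus k n, v⟫ + ⟪kminus k n, w⟫) ∂(sphMeasure d) := by
  have hk' : ‖k‖ ≠ 0 := norm_ne_zero_iff.mpr hk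
  let F : ℝ → ℝ → ℂ := fun x y => g x • expNegI (2⁻¹ * ⟪k, v + w⟫ + 2⁻¹ * ‖v - w‖ * ‖k‖ * y)
  calc _ = ∫ n, F ⟪relVelDir e v w, n⟫ ⟪‖k‖⁻¹ • k, n⟫ ∂(sphMeasure d) := by
          congr! 4 with n
          rw [inner_postCollision, real_inner_smul_left]
          field_simp
    _ = ∫ n, F ⟪‖k‖⁻¹ • k, n⟫ ⟪relVelDir e v w, n⟫ ∂(sphMeasure d) := by
          refine integral_toSphere_inner_swap ?_ F
          rw [norm_relVelDir he, norm_smul, norm_inv, norm_norm, inv_mul_cancel₀ hk']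
    _ = _ := by
          congr! 4 with n
          have h_diff : ⟪v - w, n⟫ = ‖v - w‖ * ⟪relVelDir e v w, n⟫ := by
            rw [← real_inner_smul_left, norm_sub_smul_relVelDir]
          rw [inner_kplus_add_inner_kminus, h_diff]
          ring

lemma integral_prod_expNegI_inner (μ ν : Measure (Rd d)) [SFinite μ] [SFinite ν] (a b : Rd d) :
    ∫ p, expNegI (⟪a, p.1⟫ + ⟪b, p.2⟫) ∂(μ.prod ν) = charFunRd μ a * charFunRd ν b := by
  simp_rw [expNegI_add]
  exact integral_prod_mul (fun v => expNegI ⟪a, v⟫) (fun w => expNegI ⟪b, w⟫)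

lemma charFunRd_zero (μ : Measure (Rd d)) [IsProbabilityMeasure μ] : charFunRd μ 0 = 1 := by
  simp [charFunRd]

lemma charFunRd_gainMeasure_of_ne_zero {g : ℝ → ℝ} (hg_meas : Measurable g)
    (hg_nonneg : ∀ x, 0 ≤ g x)
    (hg_norm : ∀ ω : Rd d, ‖ω‖ = 1 → ∫ n, g ⟪ω, (n : Rd d)⟫ ∂(sphMeasure d) = 1)
    {e : Rd d} (he : ‖e‖ = 1) (μ : Measure (Rd d)) [IsProbabilityMeasure μ] {k : Rd d}
    (hk : k ≠ 0) :
    charFunRd (gainMeasure g e μ) k = Iplus g (charFunRd μ) (charFunRd μ) k := by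
  have hk_unit : ‖‖k‖⁻¹ • k‖ = 1 := norm_smul_inv_norm hk
  have h_gain := integrable_kernel_smul_expNegI (ν := μ.prod μ) hg_meas hg_nonneg hg_norm
    (measurable_relVelDir e) (fun vw => norm_relVelDir he vw.1 vw.2)
    (ψ := fun p => ⟪k, postCollision p.1.1 p.1.2 p.2⟫) (by fun_prop)
  have h_split := integrable_kernel_smul_expNegI (ν := μ.prod μ) hg_meas hg_nonneg hg_norm
    measurable_const (fun _ => hk_unit)
    (ψ := fun p => ⟪kplus k p.2, p.1.1⟫ + ⟪kminus k p.2, p.1.2⟫) (by unfold kplus kminus; fun_prop)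
  calc charFunRd (gainMeasure g e μ) k
      = ∫ p, g ⟪relVelDir e p.1.1 p.1.2, p.2⟫ • expNegI ⟪k, postCollision p.1.1 p.1.2 p.2⟫
          ∂((μ.prod μ).prod (sphMeasure d)) :=
        integral_gainMeasure hg_meas hg_nonneg e μ (by fun_prop)
    _ = ∫ vw, ∫ n, g ⟪relVelDir e vw.1 vw.2, n⟫ • expNegI ⟪k, postCollision vw.1 vw.2 n⟫
          ∂(sphMeasure d) ∂(μ.prod μ) := integral_prod _ h_gain
    _ = ∫ vw, ∫ n, g (khatDot k n) • expNegI (⟪kplus k n, vw.1⟫ + ⟪kminus k n, vw.2⟫)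
          ∂(sphMeasure d) ∂(μ.prod μ) := by
        simp_rw [integral_sphere_postCollision he hk]
    _ = ∫ n, ∫ vw, g (khatDot k n) • expNegI (⟪kplus k n, vw.1⟫ + ⟪kminus k n, vw.2⟫)
          ∂(μ.prod μ) ∂(sphMeasure d) := integral_integral_swap h_split
    _ = Iplus g (charFunRd μ) (charFunRd μ) k := by
        simp_rw [integral_smul, integral_prod_expNegI_inner, Iplus, if_neg hk, Complex.real_smul,
          mul_assoc]

theorem Iplus_charFunRd_self {g : ℝ → ℝ} (hg_meas : Measurable g) (hg_nonneg : ∀ x, 0 ≤ g x)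
    (hg_norm : ∀ ω : Rd d, ‖ω‖ = 1 → ∫ n, g ⟪ω, (n : Rd d)⟫ ∂(sphMeasure d) = 1)
    {e : Rd d} (he : ‖e‖ = 1) (μ : Measure (Rd d)) [IsProbabilityMeasure μ] :
    Iplus g (charFunRd μ) (charFunRd μ) = charFunRd (gainMeasure g e μ) := by
  have := isProbabilityMeasure_gainMeasure hg_meas hg_nonneg hg_norm he μ
  funext k
  by_cases hk : k = 0
  · simp [hk, Iplus, charFunRd_zero]
  · exact (charFunRd_gainMeasure_of_ne_zero hg_meas hg_nonneg hg_norm he μ hk).symm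

end GainMeasure

/-- The gain operator maps characteristic functions to characteristic
    functions. -/
theorem Iplus_maps_charFun_to_charFun (d : ℕ) (hd : 2 ≤ d)
    (g : ℝ → ℝ) (hg_meas : Measurable g) (hg_nonneg : ∀ x, 0 ≤ g x)
    (hg_norm : ∀ ω : Rd d, ‖ω‖ = 1 → ∫ n, g ⟪ω, (n : Rd d)⟫ ∂(sphMeasure d) = 1)
    (φ : Rd d → ℂ) (hφ : IsCharFun φ) :
    IsCharFun (Iplus g φ φ) := by
  obtain ⟨μ, hμ, rfl⟩ := hφ
  obtain ⟨e, he⟩ : ∃ e : Rd d, ‖e‖ = 1 := ⟨EuclideanSpace.single ⟨0, by omega⟩ 1, by simp⟩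
  exact ⟨gainMeasure g e μ, isProbabilityMeasure_gainMeasure hg_meas hg_nonneg hg_norm he μ,
    Iplus_charFunRd_self hg_meas hg_nonneg hg_norm he μ⟩
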